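/- Let g = (√5−1)/2 and G = (√5+1)/2. Suppose (y_k)_{k≥0} is a sequence in [0,G] satisfying y_{k+1} = 1/(d_k + e_k y_k) for some odd integers d_k ≥ 1 and e_k ∈ {±1}, with d_k + e_k y_k > 0, and suppose that y_0 ∈ [1,G] and that y_1, y_2, y_3, y_4 are given by the recursion with (d_k,e_k) = (1,1) for k = 0, 1, 2, 3, i.e. four consecutive steps with digit 1 and sign +1 starting from y_0. Then y_0 y_1 y_2 y_3 y_4 = y_0/(5 + 3y_0) ≤ G/(5+3G) = 1/(5G−2). -/

import Mathlib

/-- Worst-case five-step product bound: if y_{k+1} = 1/(1+y_k) for k = 0,1,2,3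
(four consecutive steps with digit 1 and sign +1) and y_0 ∈ [1,G], then
y_0 y_1 y_2 y_3 y_4 = y_0/(5+3y_0) ≤ G/(5+3G) = 1/(5G−2), where G = (√5+1)/2. -/
theorem stmt17 (y : ℕ → ℝ) (G : ℝ) (hG : G = (Real.sqrt 5 + 1)/2)
    (h0 : y 0 ∈ Set.Icc 1 G) (hrec : ∀ k < 4, y (k+1) = 1/(1 + y k)) :
    y 0 * y 1 * y 2 * y 3 * y 4 = y 0 / (5 + 3 * y 0) ∧
    y 0 / (5 + 3 * y 0) ≤ G / (5 + 3*G) ∧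
    G / (5 + 3*G) = 1 / (5*G - 2) := by
  obtain ⟨hy1, hyG⟩ := h0
  have hs : Real.sqrt 5 ^ 2 = 5 := Real.sq_sqrt (by norm_num)
  have hs0 : Real.sqrt 5 ≥ 2 := by nlinarith [Real.sqrt_nonneg 5]
  have hG1 : G ≥ 1 := by rw [hG]; linarith
  have hGsq : G ^ 2 = G + 1 := by rw [hG]; nlinarith
  have h1 := hrec 0 (by norm_num)
  have h2 := hrec 1 (by norm_num)
  have h3 := hrec 2 (by norm_num)
  have h4 := hrec 3 (by norm_num)
  norm_num at h1 h2 h3 h4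
  have p0 : (0:ℝ) < 1 + y 0 := by linarith
  have p1 : (0:ℝ) < 1 + y 1 := by rw [h1]; positivity
  have p2 : (0:ℝ) < 1 + y 2 := by rw [h2]; positivity
  have p3 : (0:ℝ) < 1 + y 3 := by rw [h3]; positivity
  refine ⟨?_, ?_, ?_⟩
  · rw [h4, h3, h2, h1]
    rw [eq_div_iff (by linarith : (5:ℝ) + 3 * y 0 ≠ 0)]
    field_simp
    ring
  · rw [div_le_div_iff₀ (by linarith) (by linarith)]
    nlinarith
  · rw [div_eq_div_iff (by linarith) (by nlinarith)]
    nlinarith
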